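/- Let σ = ⟨e_1,…,e_m⟩ be a singular simplicial cone in a lattice N (i.e. the e_i are linearly independent primitive lattice vectors not forming part of a basis of N ∩ span(σ)). Assume one facet of σ is non-singular. Then the element v = Σ_{i=1}^m b_i e_i with all b_i ≥ 1 is not minimal in S = ⋃_{τ ≤ σ singular} τ° ∩ N with respect to the order v ≤_σ v' ⟺ v' − v ∈ σ. -/
import Mathlib

/-- The cast of a lattice vector to the rational vector space. -/
def latCast {n : ℕ} (x : Fin n → ℤ) : Fin n → ℚ := fun j => (x j : ℚ)

/-- Membership in the (closed) face of the simplicial cone spanned by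
`e i, i ∈ J`: a nonnegative rational combination of those generators. -/
def InFace {n m : ℕ} (e : Fin m → Fin n → ℤ) (J : Finset (Fin m))
    (x : Fin n → ℚ) : Prop :=
  ∃ c : Fin m → ℚ, (∀ i, 0 ≤ c i) ∧ x = ∑ i ∈ J, c i • latCast (e i)

/-- Membership in the relative interior of that face: a combination with all
coefficients (indexed by `J`) strictly positive. -/
def InRelInt {n m : ℕ} (e : Fin m → Fin n → ℤ) (J : Finset (Fin m))
    (x : Fin n → ℚ) : Prop :=
  ∃ c : Fin m → ℚ, (∀ i ∈ J, 0 < c i) ∧ x = ∑ i ∈ J, c i • latCast (e i)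

/-- The face of the simplicial cone indexed by `J` is singular: its generators do
not form a `ℤ`-basis of the lattice points of its rational span, i.e. some lattice
point in the nonnegative rational span of `(e i)_{i ∈ J}` is not a `ℤ`-combination
of them. -/
def SingularFace {n m : ℕ} (e : Fin m → Fin n → ℤ) (J : Finset (Fin m)) : Prop :=
  ¬ ∀ x : Fin n → ℤ, (∃ c : Fin m → ℚ, latCast x = ∑ i ∈ J, c i • latCast (e i)) →
      ∃ z : Fin m → ℤ, latCast x = ∑ i ∈ J, (z i : ℚ) • latCast (e i)

lemma latCast_sub' {n : ℕ} (a b : Fin n → ℤ) : latCast (a - b) = latCast a - latCast b := by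
  funext j; simp [latCast]

lemma latCast_sum_zsmul' {n m : ℕ} (e : Fin m → Fin n → ℤ) (z : Fin m → ℤ) :
    latCast (∑ i, z i • e i) = ∑ i, (z i : ℚ) • latCast (e i) := by
  funext j
  simp [latCast, Finset.sum_apply, zsmul_eq_mul]

/-- Let `σ = ⟨e_1,…,e_m⟩` be a singular simplicial cone in a
lattice `N = ℤⁿ` (the `e_i` linearly independent primitive lattice vectors), and
assume some facet of `σ` is non-singular.  Then any `v = Σ b_i e_i` with all
`b_i ≥ 1` is not minimal in `S = ⋃_{τ ≤ σ singular} τ° ∩ N` for the order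
`v' ≤_σ v ⟺ v − v' ∈ σ`: there is a lattice point `v' ∈ S` with `v' ≤_σ v` and
`v' ≠ v`. -/
theorem not_minimal_in_singular_locus
    (n m : ℕ) (e : Fin m → Fin n → ℤ)
    (hind : LinearIndependent ℚ (fun i => latCast (e i)))
    (hsing : SingularFace e Finset.univ)
    (i₀ : Fin m) (hfacet : ¬ SingularFace e (Finset.univ.erase i₀))
    (b : Fin m → ℤ) (hb : ∀ i, 1 ≤ b i)
    (v : Fin n → ℤ) (hv : v = ∑ i, b i • e i) :
    ∃ v' : Fin n → ℤ,
      (∃ J : Finset (Fin m), SingularFace e J ∧ InRelInt e J (latCast v')) ∧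
      InFace e Finset.univ (latCast v - latCast v') ∧
      v' ≠ v := by
  unfold SingularFace at hsing
  push_neg at hsing
  obtain ⟨x, ⟨c, hc⟩, hnz⟩ := hsing
  set γ : Fin m → ℚ := fun i => Int.fract (c i) with hγ
  set w : Fin n → ℤ := x - ∑ i, ⌊c i⌋ • e i with hw
  -- coefficient comparison via linear independence
  have hli := Fintype.linearIndependent_iff.mp hind
  have heq : ∀ g h : Fin m → ℚ,
      (∑ i, g i • latCast (e i)) = ∑ i, h i • latCast (e i) → ∀ i, g i = h i := by
    intro g h hgh i
    have := hli (g - h) (by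
      simp only [Pi.sub_apply, sub_smul, Finset.sum_sub_distrib, hgh, sub_self]) i
    simpa [sub_eq_zero] using this
  have hwcast : latCast w = ∑ i, γ i • latCast (e i) := by
    rw [hw, latCast_sub', latCast_sum_zsmul', hc, ← Finset.sum_sub_distrib]
    refine Finset.sum_congr rfl fun i _ => ?_
    rw [← sub_smul]
    rfl
  -- some fractional part is nonzero
  have hne : ∃ i, γ i ≠ 0 := by
    by_contra hall
    push_neg at hall
    refine hnz (fun i => ⌊c i⌋) ?_
    rw [hc]
    refine Finset.sum_congr rfl fun i _ => ?_
    have : c i - ⌊c i⌋ = 0 := hall i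
    have : (⌊c i⌋ : ℚ) = c i := by linarith
    rw [this]
  set J : Finset (Fin m) := Finset.univ.filter (fun i => γ i ≠ 0) with hJ
  have hsumJ : ∑ i ∈ J, γ i • latCast (e i) = ∑ i, γ i • latCast (e i) := by
    refine Finset.sum_subset (Finset.subset_univ _) fun i _ hiJ => ?_
    simp only [hJ, Finset.mem_filter, Finset.mem_univ, true_and, not_not] at hiJ
    rw [hiJ, zero_smul]
  have hγpos : ∀ i ∈ J, 0 < γ i := by
    intro i hi
    simp only [hJ, Finset.mem_filter, Finset.mem_univ, true_and] at hi
    exact lt_of_le_of_ne (Int.fract_nonneg _) (Ne.symm hi)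
  have hγlt : ∀ i, γ i < 1 := fun i => Int.fract_lt_one _
  refine ⟨w, ⟨J, ?_, ⟨γ, hγpos, hwcast.trans hsumJ.symm⟩⟩, ?_, ?_⟩
  · -- J is a singular face
    intro hall
    obtain ⟨z, hz⟩ := hall w ⟨γ, hwcast.trans hsumJ.symm⟩
    obtain ⟨i, hi⟩ := hne
    have hiJ : i ∈ J := by simp [hJ, hi]
    set zJ : Fin m → ℚ := fun i => if i ∈ J then (z i : ℚ) else 0 with hzJ
    have hzsum : ∑ i, zJ i • latCast (e i) = ∑ i ∈ J, (z i : ℚ) • latCast (e i) := by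
      rw [show (∑ i ∈ J, (z i : ℚ) • latCast (e i)) = ∑ i ∈ J, zJ i • latCast (e i) from
        Finset.sum_congr rfl fun i hi' => by simp [hzJ, hi']]
      exact (Finset.sum_subset (Finset.subset_univ _) fun i _ h => by simp [hzJ, h]).symm
    have hgz : γ i = zJ i := heq γ zJ (by rw [← hwcast, hz, hzsum]) i
    rw [hzJ] at hgz
    simp only [hiJ, if_pos] at hgz
    have h1 : (0 : ℚ) < (z i : ℚ) := hgz ▸ hγpos i hiJ
    have h2 : (z i : ℚ) < 1 := hgz ▸ hγlt i
    have h1' : 0 < z i := by exact_mod_cast h1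
    have h2' : z i < 1 := by exact_mod_cast h2
    omega
  · -- v - w is in the cone
    refine ⟨fun i => (b i : ℚ) - γ i, fun i => ?_, ?_⟩
    · show (0 : ℚ) ≤ (b i : ℚ) - γ i
      have : (1 : ℚ) ≤ (b i : ℚ) := by exact_mod_cast hb i
      linarith [hγlt i]
    · rw [hv, latCast_sum_zsmul', hwcast, ← Finset.sum_sub_distrib]
      exact Finset.sum_congr rfl fun i _ => by rw [sub_smul]
  · -- w ≠ v
    intro hwv
    have : latCast w = latCast v := by rw [hwv]
    rw [hwcast, hv, latCast_sum_zsmul'] at this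
    have := heq γ (fun i => (b i : ℚ)) this i₀
    have h1 : (1 : ℚ) ≤ (b i₀ : ℚ) := by exact_mod_cast hb i₀
    linarith [hγlt i₀, this ▸ h1]
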